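/- Let n,k ≥ 1 and let r be the unique integer with |S_{n,r}| ≤ k < |S_{n,r+1}|, and suppose |S_{n,r}| < k. For a finite abelian group G of order k and a surjective group homomorphism φ : ℤ^n → G, one has π(n,G,φ) = f(n,k) if and only if the restriction of φ to S_{n,r} is injective and the restriction of φ to S_{n,r+1} is surjective. -/

import Mathlib

open Set

/-- The Lee (Manhattan) distance between two words in `ℤ^n`. -/
def leeDist {n : ℕ} (v w : Fin n → ℤ) : ℕ := ∑ i, (v i - w i).natAbs

/-- The Lee sphere `S_{n,r}` of radius `r` centered at the origin. -/
def leeSphere (n r : ℕ) : Set (Fin n → ℤ) := {x | leeDist x 0 ≤ r}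

/-- `|S_{n,r}|`, the cardinality of the Lee sphere. -/
noncomputable def sphereCard (n r : ℕ) : ℕ := (leeSphere n r).ncard

/-- `π(n,G,φ,g)`: the minimum Lee distance from the origin of a preimage of `g` under `φ`. -/
noncomputable def piMinDist {n : ℕ} {G : Type*} [AddCommGroup G]
    (φ : (Fin n → ℤ) →+ G) (g : G) : ℕ :=
  sInf {d | ∃ x : Fin n → ℤ, φ x = g ∧ leeDist x 0 = d}

/-- `π(n,G,φ) = ∑_{g ∈ G} π(n,G,φ,g)`. -/
noncomputable def piEmbed {n : ℕ} {G : Type*} [AddCommGroup G] [Fintype G]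
    (φ : (Fin n → ℤ) →+ G) : ℕ :=
  ∑ g : G, piMinDist φ g

/-- `f(n,k) = ∑_{i=1}^r i(|S_{n,i}| − |S_{n,i−1}|) + (r+1)(k − |S_{n,r}|)`,
where `r` is the unique integer with `|S_{n,r}| ≤ k < |S_{n,r+1}|`. -/
noncomputable def fnk (n k r : ℕ) : ℕ :=
  (∑ i ∈ Finset.Icc 1 r, i * (sphereCard n i - sphereCard n (i - 1)))
    + (r + 1) * (k - sphereCard n r)

/-! Layer-cake: `π(n,G,φ) = ∑_{d ≥ 0} #{g : π(g) > d} = ∑_d (k − |φ(S_{n,d})|)`, while Abel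
summation gives `f(n,k) = ∑_{d ≤ r} (k − |S_{n,d}|)`. Since `|φ(S_{n,d})| ≤ |S_{n,d}|`, every
layer of the first sum dominates the corresponding one of the second, so the sums agree exactly
when each layer does: `φ` is injective on `S_{n,d}` for `d ≤ r` and maps `S_{n,d}` onto `G` for
`d > r`. As the spheres are nested, `d = r` and `d = r + 1` are the cases that matter. -/

lemma leeSphere_finite (n r : ℕ) : (leeSphere n r).Finite := by
  refine (Finite.pi (t := fun _ : Fin n => Icc (-(r : ℤ)) r)
    fun _ => finite_Icc _ _).subset fun x hx i _ => ?_
  have hi : (x i).natAbs ≤ r := by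
    simpa using (Finset.single_le_sum (fun j _ => Nat.zero_le ((x j - 0).natAbs))
      (Finset.mem_univ i)).trans hx
  simp only [mem_Icc]
  omega

lemma leeSphere_mono (n : ℕ) {d e : ℕ} (h : d ≤ e) : leeSphere n d ⊆ leeSphere n e :=
  fun _ hx => le_trans hx h

lemma sphereCard_mono (n : ℕ) {d e : ℕ} (h : d ≤ e) : sphereCard n d ≤ sphereCard n e :=
  ncard_le_ncard (leeSphere_mono n h) (leeSphere_finite n e)

lemma fnk_succ {n k r : ℕ} (h : sphereCard n (r + 1) ≤ k) :
    fnk n k (r + 1) = fnk n k r + (k - sphereCard n (r + 1)) := by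
  have hmono := sphereCard_mono n (Nat.le_add_right r 1)
  rw [fnk, fnk, Finset.sum_Icc_succ_top (Nat.le_add_left 1 r), Nat.add_sub_cancel]
  have hsplit : k - sphereCard n r
      = (sphereCard n (r + 1) - sphereCard n r) + (k - sphereCard n (r + 1)) := by omega
  rw [hsplit]
  ring

lemma fnk_eq_sum_range {n k r : ℕ} (h : sphereCard n r ≤ k) :
    fnk n k r = ∑ d ∈ Finset.range (r + 1), (k - sphereCard n d) := by
  induction r with
  | zero => simp [fnk]
  | succ r ih =>
    rw [fnk_succ h, Finset.sum_range_succ, ih ((sphereCard_mono n r.le_succ).trans h)]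

lemma fnk_eq_sum_range_ite {n k r : ℕ} (h : sphereCard n r ≤ k) {M : ℕ} (hM : r + 1 ≤ M) :
    fnk n k r = ∑ d ∈ Finset.range M, if d ≤ r then k - sphereCard n d else 0 := by
  rw [fnk_eq_sum_range h, ← Finset.sum_filter]
  congr 1
  ext d
  simp only [Finset.mem_range, Finset.mem_filter]
  omega

lemma sum_eq_sum_range_ncard_lt {α : Type*} [Fintype α] (t : α → ℕ) {M : ℕ}
    (ht : ∀ a, t a ≤ M) : ∑ a, t a = ∑ d ∈ Finset.range M, {a | d < t a}.ncard := by
  classical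
  calc ∑ a, t a = ∑ a, ∑ d ∈ Finset.range M, if d < t a then 1 else 0 := by
        refine Finset.sum_congr rfl fun a _ => ?_
        rw [← Finset.card_filter, Finset.range_eq_Ico, Finset.Ico_filter_lt_of_le_right (ht a),
          Nat.card_Ico, Nat.sub_zero]
    _ = ∑ d ∈ Finset.range M, ∑ a, if d < t a then 1 else 0 := Finset.sum_comm
    _ = ∑ d ∈ Finset.range M, {a | d < t a}.ncard := by
        simp only [← Finset.card_filter, ← ncard_coe_finset, Finset.coe_filter,
          Finset.mem_univ, true_and]

section Embedding

variable {n : ℕ} {G : Type*} [AddCommGroup G] {φ : (Fin n → ℤ) →+ G}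

lemma piMinDist_le_iff (hφ : Function.Surjective φ) (g : G) (d : ℕ) :
    piMinDist φ g ≤ d ↔ g ∈ φ '' leeSphere n d := by
  constructor
  · intro h
    obtain ⟨x, hx⟩ := hφ g
    have hne : {d | ∃ x, φ x = g ∧ leeDist x 0 = d}.Nonempty := ⟨_, x, hx, rfl⟩
    obtain ⟨y, hy, hd⟩ := Nat.sInf_mem hne
    exact ⟨y, show leeDist y 0 ≤ d from hd ▸ h, hy⟩
  · rintro ⟨x, hx, rfl⟩
    exact (Nat.sInf_le ⟨x, rfl, rfl⟩ : piMinDist φ (φ x) ≤ leeDist x 0).trans hx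

lemma piMinDist_le_piEmbed [Fintype G] (g : G) : piMinDist φ g ≤ piEmbed φ :=
  Finset.single_le_sum (fun _ _ => Nat.zero_le _) (Finset.mem_univ g)

lemma piEmbed_eq_sum_range [Fintype G] (hφ : Function.Surjective φ) {M : ℕ}
    (hM : ∀ g, piMinDist φ g ≤ M) :
    piEmbed φ = ∑ d ∈ Finset.range M, (Nat.card G - (φ '' leeSphere n d).ncard) := by
  rw [piEmbed, sum_eq_sum_range_ncard_lt _ hM]
  refine Finset.sum_congr rfl fun d _ => ?_
  have hcompl : {g | d < piMinDist φ g} = (φ '' leeSphere n d)ᶜ := by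
    ext g
    simp [← piMinDist_le_iff hφ]
  rw [hcompl, ncard_compl]

lemma injOn_leeSphere_iff {d : ℕ} :
    InjOn φ (leeSphere n d) ↔ (φ '' leeSphere n d).ncard = sphereCard n d :=
  (ncard_image_iff (leeSphere_finite n d)).symm

lemma surjOn_leeSphere_iff [Finite G] {d : ℕ} :
    SurjOn φ (leeSphere n d) univ ↔ (φ '' leeSphere n d).ncard = Nat.card G :=
  univ_subset_iff.trans (eq_univ_iff_ncard _)

end Embedding

theorem embedding_number_eq_iff_general
    (n k : ℕ)
    (r : ℕ) (hr₁ : sphereCard n r ≤ k)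
    (G : Type) [AddCommGroup G] [Fintype G] (hG : Nat.card G = k)
    (φ : (Fin n → ℤ) →+ G) (hφ : Function.Surjective φ) :
    piEmbed φ = fnk n k r ↔
      Set.InjOn φ (leeSphere n r) ∧ Set.SurjOn φ (leeSphere n (r + 1)) Set.univ := by
  subst hG
  obtain ⟨M, hrM, hM⟩ : ∃ M, r + 1 < M ∧ ∀ g, piMinDist φ g ≤ M :=
    ⟨piEmbed φ + r + 2, by omega, fun g => (piMinDist_le_piEmbed g).trans (by omega)⟩
  have hImage : ∀ d, (φ '' leeSphere n d).ncard ≤ sphereCard n d := fun d =>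
    ncard_image_le (leeSphere_finite n d)
  have hle : ∀ d, (if d ≤ r then Nat.card G - sphereCard n d else 0)
      ≤ Nat.card G - (φ '' leeSphere n d).ncard := fun d => by
    split_ifs
    exacts [Nat.sub_le_sub_left (hImage d) _, Nat.zero_le _]
  rw [piEmbed_eq_sum_range hφ hM, fnk_eq_sum_range_ite hr₁ hrM.le, eq_comm,
    Finset.sum_eq_sum_iff_of_le fun d _ => hle d]
  constructor
  · intro h
    have hlayer := h r (Finset.mem_range.2 (by omega))
    have hlayer_succ := h (r + 1) (Finset.mem_range.2 hrM)
    rw [if_pos le_rfl] at hlayer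
    rw [if_neg (by omega)] at hlayer_succ
    have hImage_r := hImage r
    have hImage_succ := ncard_le_card (φ '' leeSphere n (r + 1))
    exact ⟨injOn_leeSphere_iff.2 (by omega), surjOn_leeSphere_iff.2 (by omega)⟩
  · rintro ⟨hinj, hsurj⟩ d -
    split_ifs with hdr
    · rw [injOn_leeSphere_iff.1 (hinj.mono (leeSphere_mono n hdr))]
    · rw [surjOn_leeSphere_iff.1 (hsurj.mono (leeSphere_mono n (by omega)) subset_rfl),
        Nat.sub_self]

theorem embedding_number_eq_iff
    (n k : ℕ) (hn : 1 ≤ n) (hk : 1 ≤ k)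
    (r : ℕ) (hr₁ : sphereCard n r ≤ k) (hr₂ : k < sphereCard n (r + 1))
    (hlt : sphereCard n r < k)
    (G : Type) [AddCommGroup G] [Fintype G] (hG : Nat.card G = k)
    (φ : (Fin n → ℤ) →+ G) (hφ : Function.Surjective φ) :
    piEmbed φ = fnk n k r ↔
      Set.InjOn φ (leeSphere n r) ∧ Set.SurjOn φ (leeSphere n (r + 1)) Set.univ :=
  embedding_number_eq_iff_general n k r hr₁ G hG φ hφ
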